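/- Pointwise maximization with a nonnegativity constraint: if R̄ is a differentiable strictly convex function on ℝ with surjective derivative, then for any a ∈ ℝ, sup_{u ≥ 0} (a·u − R̄(u)) = a·u⋆ − R̄(u⋆) where u⋆ = (∇R̄*)(max{a, ∇R̄(0)}), and moreover sup_{u ≥ 0}(a·u − R̄(u)) = R̄*(max{a, ∇R̄(0)}) − R̄*(∇R̄(0)) + R̄(0) holds in the case R̄(0)=0 as sup_{u ≥ 0}(a·u − R̄(u)) = R̄*(max{a, ∇R̄(0)}) when additionally ∇R̄*(∇R̄(0)) = 0. -/
import Mathlib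

/-- Support line inequality for a convex differentiable function on ℝ. -/
lemma support_line_ineq (Rb : ℝ → ℝ) (hconv : ConvexOn ℝ Set.univ Rb)
    (hdiff : Differentiable ℝ Rb) (w u : ℝ) :
    Rb w + deriv Rb w * (u - w) ≤ Rb u := by
  rcases lt_trichotomy w u with h | h | h
  · have := hconv.deriv_le_slope (Set.mem_univ w) (Set.mem_univ u) h (hdiff w)
    rw [slope_def_field] at this
    have hne : u - w > 0 := by linarith
    have := (le_div_iff₀ hne).mp this
    nlinarith [this]
  · simp [h]
  · have := hconv.slope_le_deriv (Set.mem_univ u) (Set.mem_univ w) h (hdiff w)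
    rw [slope_def_field] at this
    have hne : w - u > 0 := by linarith
    have := (div_le_iff₀ hne).mp this
    nlinarith [this]

/-- Pointwise maximization with a nonnegativity constraint, for a differentiable
strictly convex `R̄` with surjective derivative (inverse `∇R̄* = Rinv`). -/
theorem constrained_pointwise_maximization
    (Rb : ℝ → ℝ) (Rinv : ℝ → ℝ)
    (hconv : StrictConvexOn ℝ Set.univ Rb)
    (hdiff : Differentiable ℝ Rb)
    (hleft : Function.LeftInverse Rinv (deriv Rb))
    (hright : Function.RightInverse Rinv (deriv Rb))
    (a : ℝ) :
    (⨆ u : {u : ℝ // 0 ≤ u}, a * (u : ℝ) - Rb u)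
      = a * Rinv (max a (deriv Rb 0)) - Rb (Rinv (max a (deriv Rb 0))) ∧
    (Rb 0 = 0 → Rinv (deriv Rb 0) = 0 →
      (⨆ u : {u : ℝ // 0 ≤ u}, a * (u : ℝ) - Rb u)
        = (⨆ u : ℝ, u * max a (deriv Rb 0) - Rb u)) := by
  set m := max a (deriv Rb 0) with hm
  set w := Rinv m with hw
  have hcv : ConvexOn ℝ Set.univ Rb := hconv.convexOn
  have hdw : deriv Rb w = m := hright m
  have hw0 : Rinv (deriv Rb 0) = 0 := hleft 0
  -- key bound for the constrained sup
  have key : ∀ u : ℝ, 0 ≤ u → a * u - Rb u ≤ a * w - Rb w := by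
    intro u hu
    have hs := support_line_ineq Rb hcv hdiff w u
    rw [hdw] at hs
    rcases le_total (deriv Rb 0) a with h | h
    · have hma : m = a := max_eq_left h
      rw [hma] at hs
      linarith
    · have hma : m = deriv Rb 0 := max_eq_right h
      have hww : w = 0 := by rw [hw, hma, hw0]
      rw [hww] at hs ⊢
      rw [hma] at hs
      nlinarith [mul_nonneg (sub_nonneg.mpr h) hu]
  have hw_nonneg : (0 : ℝ) ≤ w := by
    rcases le_total (deriv Rb 0) a with h | h
    · -- m ≥ deriv Rb 0, so w ≥ 0 since deriv Rb is monotone (strictly)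
      by_contra hneg
      push_neg at hneg
      have hmono := hconv.strictMonoOn_deriv (fun x _ => hdiff x)
      have := hmono (Set.mem_univ w) (Set.mem_univ 0) hneg
      rw [hdw] at this
      exact absurd (le_max_right a (deriv Rb 0)) (not_le.mpr this)
    · rw [hw, hm, max_eq_right h, hw0]
  have hbdd : BddAbove (Set.range fun u : {u : ℝ // 0 ≤ u} => a * (u : ℝ) - Rb u) :=
    ⟨a * w - Rb w, by rintro x ⟨⟨u, hu⟩, rfl⟩; exact key u hu⟩
  have h1 : (⨆ u : {u : ℝ // 0 ≤ u}, a * (u : ℝ) - Rb u) = a * w - Rb w := by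
    apply le_antisymm
    · exact ciSup_le fun ⟨u, hu⟩ => key u hu
    · exact le_ciSup hbdd ⟨w, hw_nonneg⟩
  refine ⟨h1, fun _ _ => ?_⟩
  -- unconstrained sup of u ↦ u * m - Rb u equals w * m - Rb w
  have key2 : ∀ u : ℝ, u * m - Rb u ≤ w * m - Rb w := by
    intro u
    have hs := support_line_ineq Rb hcv hdiff w u
    rw [hdw] at hs
    nlinarith [hs]
  have h2 : (⨆ u : ℝ, u * m - Rb u) = w * m - Rb w := by
    apply le_antisymm
    · exact ciSup_le key2
    · exact le_ciSup ⟨w * m - Rb w, by rintro x ⟨u, rfl⟩; exact key2 u⟩ w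
  rw [h1, h2]
  rcases le_total (deriv Rb 0) a with h | h
  · rw [hm, max_eq_left h]; ring
  · have hww : w = 0 := by rw [hw, hm, max_eq_right h, hw0]
    rw [hww]; ring
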